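/- arXiv:2208.13276 — 2 statements merged into one kernel-verified Lean document; each statement's English description precedes it below -/
import Mathlib

section
/- Let (S, ≼) be a preordered set and N : S → ℝ an increasing bounded function (i.e., s ≼ t implies N(s) ≤ N(t), and N is bounded above). If every increasing sequence in S has an upper bound in S, then there exists an N-maximal element s₀ ∈ S, i.e., for all s ∈ S, s₀ ≼ s implies N(s₀) = N(s). -/
/-- Brezis–Browder ordering principle: if `N` is increasing and bounded above on a
preordered set in which every increasing sequence has an upper bound, then there is an
`N`-maximal element. -/
theorem brezis_browder {S : Type*} [Preorder S] [Nonempty S] (N : S → ℝ)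
    (hmono : ∀ s t : S, s ≤ t → N s ≤ N t)
    (hbdd : ∃ B : ℝ, ∀ s : S, N s ≤ B)
    (hchain : ∀ f : ℕ → S, (∀ n, f n ≤ f (n + 1)) → ∃ s : S, ∀ n, f n ≤ s) :
    ∃ s₀ : S, ∀ s : S, s₀ ≤ s → N s₀ = N s := by
  obtain ⟨B, hB⟩ := hbdd
  set A : S → Set ℝ := fun t => N '' {u | t ≤ u} with hA
  have hne : ∀ t, (A t).Nonempty := fun t => ⟨N t, t, le_refl t, rfl⟩
  have hbd : ∀ t, BddAbove (A t) := by
    intro t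
    exact ⟨B, by rintro x ⟨u, _, rfl⟩; exact hB u⟩
  have key : ∀ t : S, ∀ n : ℕ, ∃ u : S, t ≤ u ∧ sSup (A t) - 1 / (n + 1) < N u := by
    intro t n
    have hlt : sSup (A t) - 1 / (n + 1) < sSup (A t) := by
      have : (0:ℝ) < 1 / (n + 1) := by positivity
      linarith
    obtain ⟨x, hx, hxlt⟩ := exists_lt_of_lt_csSup (hne t) hlt
    obtain ⟨u, hu, rfl⟩ := hx
    exact ⟨u, hu, hxlt⟩
  -- build the sequence
  let f : ℕ → S := fun n => Nat.rec (Classical.arbitrary S)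
    (fun n t => (key t n).choose) n
  have hstep : ∀ n, f (n + 1) = (key (f n) n).choose := fun n => rfl
  have hmono' : ∀ n, f n ≤ f (n + 1) := fun n => (key (f n) n).choose_spec.1
  have hfN : ∀ n, sSup (A (f n)) - 1 / (n + 1) < N (f (n + 1)) :=
    fun n => (key (f n) n).choose_spec.2
  obtain ⟨s₀, hs₀⟩ := hchain f hmono'
  refine ⟨s₀, fun s hs => ?_⟩
  have hle : N s₀ ≤ N s := hmono _ _ hs
  have hge : N s ≤ N s₀ := by
    apply le_of_forall_pos_le_add
    intro ε hε
    obtain ⟨n, hn⟩ := exists_nat_one_div_lt hε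
    have h1 : N s ≤ sSup (A (f n)) :=
      le_csSup (hbd (f n)) ⟨s, le_trans (hs₀ n) hs, rfl⟩
    have h2 : N (f (n + 1)) ≤ N s₀ := hmono _ _ (hs₀ (n + 1))
    have h3 := hfN n
    have : (1:ℝ) / (n + 1) < ε := hn
    linarith
  linarith
end

section
/- Let s ↦ ρ_s be defined by ρ(s,ω) := Σₙ ρ⁽ⁿ⁾(s,ω)·1_{[τₙ₋₁(ω), τₙ(ω))}(s) + s·1_{[τ̄(ω), ∞)}(s), where τₙ ↑ τ̄ are stopping times, each ρ⁽ⁿ⁾ is nondecreasing càdlàg adapted with s - ε ≤ ρ⁽ⁿ⁾_s ≤ s on ⟦0, τₙ⟦, ρ⁽ⁿ⁾_s = s on ⟦τₙ, ∞⟦, and ρ⁽ⁿ⁺¹⁾ = ρ⁽ⁿ⁾ on ⟦0, τₙ⟧. Then ρ is nondecreasing càdlàg adapted with s - ε ≤ ρ_s ≤ s on ⟦0, τ̄⟦ and ρ_s = s on ⟦τ̄, ∞⟦. -/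
/-!
By consistency, `ρ̄` coincides with `ρ⁽ⁿ⁾` on the whole of `⟦0, τₙ⟦`, and it is the identity on
`⟦τ̄, ∞⟦`. Since `{u < τₙ}` is a neighbourhood of `s`, every pathwise property of `ρ̄` at a time
`s < τ̄` is inherited from a single `ρ⁽ⁿ⁾` with `s < τₙ`; left limits exist by monotonicity.
Adaptedness holds because `ρ̄_s = ρ⁽ⁿ⁾_s` for the first `n` with `s < τₙ`, and these events are
`ℱ_s`-measurable as the `τₙ` are stopping times.
-/

open MeasureTheory Filter Set
open scoped Classical

section Paste

variable {α : Type*} [LinearOrder α] {τ : ℕ → α} {f : ℕ → α → α} {s : α} {n : ℕ}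

/-- The paper's `Σₙ f⁽ⁿ⁾(s) 1_{[τₙ₋₁, τₙ)}(s) + s 1_{[sup τ, ∞)}(s)`, for nondecreasing `τ`. -/
noncomputable def pasteAlong (τ : ℕ → α) (f : ℕ → α → α) (s : α) : α :=
  if h : ∃ n, s < τ n then f (Nat.find h) s else s

theorem eq_of_le_of_le_threshold (hτ : Monotone τ)
    (hf : ∀ n s, s ≤ τ n → f (n + 1) s = f n s) {k m : ℕ} (hkm : k ≤ m) (hs : s ≤ τ k) :
    f m s = f k s := by
  induction m, hkm using Nat.le_induction with
  | base => rfl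
  | succ m hkm ih => rw [hf m s (hs.trans (hτ hkm)), ih]

theorem pasteAlong_eq_of_lt (hτ : Monotone τ) (hf : ∀ n s, s ≤ τ n → f (n + 1) s = f n s)
    (hs : s < τ n) : pasteAlong τ f s = f n s := by
  have h : ∃ m, s < τ m := ⟨n, hs⟩
  rw [pasteAlong, dif_pos h]
  exact (eq_of_le_of_le_threshold hτ hf (Nat.find_le hs) (Nat.find_spec h).le).symm

theorem pasteAlong_eq_self (hs : ∀ n, τ n ≤ s) : pasteAlong τ f s = s := by
  simp only [pasteAlong, not_lt.mpr (hs _), exists_false, dite_false]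

theorem pasteAlong_le_self (hle : ∀ n s, s < τ n → f n s ≤ s) : pasteAlong τ f s ≤ s := by
  unfold pasteAlong
  split_ifs with h
  · exact hle _ s (Nat.find_spec h)
  · exact le_rfl

theorem monotone_pasteAlong (hτ : Monotone τ) (hf : ∀ n s, s ≤ τ n → f (n + 1) s = f n s)
    (hmono : ∀ n, Monotone (f n)) (hle : ∀ n s, s < τ n → f n s ≤ s) :
    Monotone (pasteAlong τ f) := by
  intro s t hst
  by_cases h : ∃ n, t < τ n
  · obtain ⟨n, ht⟩ := h
    rw [pasteAlong_eq_of_lt hτ hf (hst.trans_lt ht), pasteAlong_eq_of_lt hτ hf ht]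
    exact hmono n hst
  · push Not at h
    rw [pasteAlong_eq_self h]
    exact pasteAlong_le_self hle |>.trans hst

theorem continuousWithinAt_Ici_pasteAlong [TopologicalSpace α] [OrderTopology α]
    (hτ : Monotone τ) (hf : ∀ n s, s ≤ τ n → f (n + 1) s = f n s)
    (hrc : ∀ n, ContinuousWithinAt (f n) (Ici s) s) :
    ContinuousWithinAt (pasteAlong τ f) (Ici s) s := by
  by_cases h : ∃ n, s < τ n
  · obtain ⟨n, hn⟩ := h
    refine (hrc n).congr_of_eventuallyEq ?_ (pasteAlong_eq_of_lt hτ hf hn)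
    filter_upwards [mem_nhdsWithin_of_mem_nhds (Iio_mem_nhds hn)] with u hu
    exact pasteAlong_eq_of_lt hτ hf hu
  · push Not at h
    exact continuousWithinAt_id.congr (fun u hu => pasteAlong_eq_self fun n => (h n).trans hu)
      (pasteAlong_eq_self h)

end Paste

theorem Measurable.dite_exists_find {Ω β : Type*} {m : MeasurableSpace Ω} [MeasurableSpace β]
    {p : ℕ → Ω → Prop} (hp : ∀ n, MeasurableSet {ω | p n ω}) {f : ℕ → Ω → β}
    (hf : ∀ n, Measurable (f n)) {g : Ω → β} (hg : Measurable g) :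
    Measurable fun ω => if h : ∃ n, p n ω then f (Nat.find h) ω else g ω := by
  set E := {ω | ∃ n, p n ω}
  -- Totalizing `p` outside `E` makes `Nat.find` applicable everywhere.
  have htot : ∀ ω, ∃ n, p n ω ∨ ω ∉ E := fun ω =>
    if h : ω ∈ E then h.imp fun _ => Or.inl else ⟨0, Or.inr h⟩
  have hE : MeasurableSet E := by
    simpa only [E, ofPred_exists] using MeasurableSet.iUnion hp
  have hfind : Measurable fun ω => f (Nat.find (htot ω)) ω :=
    Measurable.find (p := fun n ω => p n ω ∨ ω ∉ E) hf (fun n => (hp n).union hE.compl) htot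
  convert hfind.piecewise hE hg using 1
  ext ω
  by_cases h : ∃ n, p n ω
  · rw [piecewise_eq_of_mem E _ _ h, dif_pos h,
      Nat.find_congr' fun {n} => or_iff_left (not_not_intro h)]
  · rw [piecewise_eq_of_notMem E _ _ h, dif_neg h]

theorem pasted_delay_process_general {Ω : Type*} {m0 : MeasurableSpace Ω}
    (ℱ : Filtration ℝ m0) (T ε : ℝ)
    (τ : ℕ → Ω → ℝ) (hst : ∀ n, IsStoppingTime ℱ (fun ω => ((τ n ω : ℝ) : WithTop ℝ)))
    (hmono : ∀ n ω, τ n ω ≤ τ (n + 1) ω) (hT : ∀ n ω, τ n ω ≤ T)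
    (τbar : Ω → ℝ) (hτbar : ∀ ω, τbar ω = ⨆ n, τ n ω)
    (ρ : ℕ → ℝ → Ω → ℝ)
    (hρmono : ∀ n ω, Monotone fun s => ρ n s ω)
    (hρrc : ∀ n ω s, ContinuousWithinAt (fun u => ρ n u ω) (Set.Ici s) s)
    (hρadapted : ∀ n, Adapted ℱ (ρ n))
    (hρbd : ∀ n s ω, s < τ n ω → s - ε ≤ ρ n s ω ∧ ρ n s ω ≤ s)
    (hconsist : ∀ n s ω, s ≤ τ n ω → ρ (n + 1) s ω = ρ n s ω)
    (ρbar : ℝ → Ω → ℝ)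
    (hρbar : ∀ s ω, ρbar s ω =
      if h : ∃ n, s < τ n ω then ρ (Nat.find h) s ω else s) :
    (∀ ω, Monotone fun s => ρbar s ω) ∧
      (∀ ω s, ContinuousWithinAt (fun u => ρbar u ω) (Set.Ici s) s) ∧
      (∀ ω s, ∃ l : ℝ, Tendsto (fun u => ρbar u ω) (nhdsWithin s (Set.Iio s)) (nhds l)) ∧
      Adapted ℱ ρbar ∧
      (∀ s ω, s < τbar ω → s - ε ≤ ρbar s ω ∧ ρbar s ω ≤ s) ∧
      (∀ s ω, τbar ω ≤ s → ρbar s ω = s) := by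
  have hpaste s ω : ρbar s ω = pasteAlong (τ · ω) (ρ · · ω) s := hρbar s ω
  have hτmono ω : Monotone (τ · ω) := monotone_nat_of_le_succ (hmono · ω)
  have hbdd ω : BddAbove (range (τ · ω)) := ⟨T, forall_mem_range.2 (hT · ω)⟩
  have hmonotone ω : Monotone fun s => ρbar s ω := by
    simp only [hpaste]
    exact monotone_pasteAlong (hτmono ω) (hconsist · · ω) (hρmono · ω)
      fun n s hs => (hρbd n s ω hs).2
  refine ⟨hmonotone, fun ω s => ?_, fun ω s => ⟨_, (hmonotone ω).tendsto_nhdsLT s⟩,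
    fun s => ?_, fun s ω hs => ?_, fun s ω hs => ?_⟩
  · simp only [hpaste]
    exact continuousWithinAt_Ici_pasteAlong (hτmono ω) (hconsist · · ω) (hρrc · ω s)
  · rw [show ρbar s = _ from funext (hρbar s)]
    refine Measurable.dite_exists_find (fun n => ?_) (hρadapted · s) measurable_const
    simpa only [WithTop.coe_lt_coe] using (hst n).measurableSet_gt s
  · obtain ⟨n, hn⟩ := (lt_ciSup_iff (hbdd ω)).1 (hτbar ω ▸ hs)
    rw [hpaste, pasteAlong_eq_of_lt (hτmono ω) (hconsist · · ω) hn]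
    exact hρbd n s ω hn
  · rw [hpaste]
    exact pasteAlong_eq_self fun n => (hτbar ω ▸ le_ciSup (hbdd ω) n).trans hs

/-- Pasting of the time-delay processes in Step 2 of Proposition 4.9: the pasted process
`ρ̄ = Σₙ ρ⁽ⁿ⁾·1_{[τₙ₋₁, τₙ)} + s·1_{[τ̄, ∞)}` is nondecreasing, càdlàg, adapted, with
`s - ε ≤ ρ̄_s ≤ s` on `⟦0, τ̄⟦` and `ρ̄_s = s` on `⟦τ̄, ∞⟦`. -/
theorem pasted_delay_process {Ω : Type*} {m0 : MeasurableSpace Ω}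
    (ℱ : Filtration ℝ m0) (T ε : ℝ) (hε : 0 < ε)
    (τ : ℕ → Ω → ℝ) (hst : ∀ n, IsStoppingTime ℱ (fun ω => ((τ n ω : ℝ) : WithTop ℝ)))
    (hτ0 : ∀ ω, τ 0 ω = 0)
    (hmono : ∀ n ω, τ n ω ≤ τ (n + 1) ω) (hT : ∀ n ω, τ n ω ≤ T)
    (τbar : Ω → ℝ) (hτbar : ∀ ω, τbar ω = ⨆ n, τ n ω)
    (ρ : ℕ → ℝ → Ω → ℝ)
    (hρmono : ∀ n ω, Monotone fun s => ρ n s ω)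
    (hρrc : ∀ n ω s, ContinuousWithinAt (fun u => ρ n u ω) (Set.Ici s) s)
    (hρll : ∀ n ω s, ∃ l : ℝ, Tendsto (fun u => ρ n u ω) (nhdsWithin s (Set.Iio s)) (nhds l))
    (hρadapted : ∀ n, Adapted ℱ (ρ n))
    (hρbd : ∀ n s ω, s < τ n ω → s - ε ≤ ρ n s ω ∧ ρ n s ω ≤ s)
    (hρeq : ∀ n s ω, τ n ω ≤ s → ρ n s ω = s)
    (hconsist : ∀ n s ω, s ≤ τ n ω → ρ (n + 1) s ω = ρ n s ω)
    (ρbar : ℝ → Ω → ℝ)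
    (hρbar : ∀ s ω, ρbar s ω =
      if h : ∃ n, s < τ n ω then ρ (Nat.find h) s ω else s) :
    (∀ ω, Monotone fun s => ρbar s ω) ∧
      (∀ ω s, ContinuousWithinAt (fun u => ρbar u ω) (Set.Ici s) s) ∧
      (∀ ω s, ∃ l : ℝ, Tendsto (fun u => ρbar u ω) (nhdsWithin s (Set.Iio s)) (nhds l)) ∧
      Adapted ℱ ρbar ∧
      (∀ s ω, s < τbar ω → s - ε ≤ ρbar s ω ∧ ρbar s ω ≤ s) ∧
      (∀ s ω, τbar ω ≤ s → ρbar s ω = s) :=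
  pasted_delay_process_general ℱ T ε τ hst hmono hT τbar hτbar ρ hρmono hρrc hρadapted hρbd hconsist
    ρbar hρbar
end
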